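/- arXiv:1710.10450 — 3 statements merged into one kernel-verified Lean document; each statement's English description precedes it below -/
import Mathlib

section
/- Let S be an N×N complex matrix. If every N×N complex matrix H that commutes with S can be written as a polynomial in S, then the characteristic polynomial of S equals its minimal polynomial. -/
/-!
Regard `ℂ^N` as a `ℂ[X]`-module through `S`. By the structure theorem it is isomorphic to
`∏ i, ℂ[X] ⧸ (q i)`, which is a ring, and multiplication by any element of this ring is a
`ℂ[X]`-linear endomorphism, that is, a matrix commuting with `S`. By hypothesis each of these is a
polynomial in `S`, so the module is generated by the element corresponding to `1`: `S` has a
cyclic vector. Then `ℂ^N` is spanned by `v, S v, …, S^(d-1) v` with `d = deg (minpoly S)`, hence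
`N ≤ d`, and the monic divisor `minpoly S` of the degree-`N` polynomial `charpoly S` equals it.
-/

open Polynomial Module

namespace Module

variable {R M : Type*} [CommRing R] [AddCommGroup M] [Module R M]

theorem isPrincipal_of_linearEquiv_algebra {A : Type*} [Semiring A] [Algebra R A]
    (e : M ≃ₗ[R] A) (h : Function.Surjective (algebraMap R (Module.End R M))) :
    IsPrincipal R M := by
  refine ⟨e.symm 1, (top_unique fun x _ => Submodule.mem_span_singleton.mpr ?_).symm⟩
  obtain ⟨r, hr⟩ := h (e.symm.toLinearMap ∘ₗ LinearMap.mulLeft R (e x) ∘ₗ e.toLinearMap)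
  exact ⟨r, by simpa using LinearMap.congr_fun hr (e.symm 1)⟩

theorem IsTorsion.isPrincipal_of_surjective_algebraMap [IsDomain R] [IsPrincipalIdealRing R]
    [Module.Finite R M] (hM : IsTorsion R M)
    (h : Function.Surjective (algebraMap R (Module.End R M))) :
    IsPrincipal R M := by
  obtain ⟨ι, _, p, -, e, ⟨eqv⟩⟩ := equiv_directSum_of_isTorsion hM
  exact isPrincipal_of_linearEquiv_algebra (eqv.trans (DirectSum.linearEquivFunOnFintype R ι _)) h

end Module

namespace Module.AEval'

variable {K V : Type*} [CommRing K] [AddCommGroup V] [Module K V]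

theorem surjective_algebraMap_end (f : Module.End K V)
    (h : ∀ g : Module.End K V, Commute g f → ∃ q : K[X], g = aeval f q) :
    Function.Surjective (algebraMap K[X] (Module.End K[X] (AEval' f))) := by
  intro φ
  set g : Module.End K V := (of f).symm.toLinearMap ∘ₗ φ.restrictScalars K ∘ₗ (of f).toLinearMap
  have hg : Commute g f := LinearMap.ext fun v => by
    simp only [g, Module.End.mul_apply, LinearMap.comp_apply, LinearEquiv.coe_coe,
      LinearMap.restrictScalars_apply, ← X_smul_of, map_smul, of_symm_X_smul]
  obtain ⟨q, hq⟩ := h g hg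
  refine ⟨q, LinearMap.ext fun x => ?_⟩
  obtain ⟨v, rfl⟩ := (of f).surjective x
  have hv : (of f).symm (φ (of f v)) = aeval f q v := LinearMap.congr_fun hq v
  rw [Module.algebraMap_end_apply, ← AEval.of_aeval_smul, Module.End.smul_def, ← hv,
    LinearEquiv.apply_symm_apply]

end Module.AEval'

namespace Module.End

variable {K V : Type*} [Field K] [AddCommGroup V] [Module K V] [FiniteDimensional K V]

theorem finrank_le_natDegree_minpoly (f : Module.End K V) [IsPrincipal K[X] (AEval' f)] :
    finrank K V ≤ (minpoly K f).natDegree := by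
  obtain ⟨v, hv⟩ := Submodule.IsPrincipal.principal (⊤ : Submodule K[X] (AEval' f))
  set μ := minpoly K f
  have hμ : μ • v = 0 := by
    rw [← (AEval'.of f).apply_symm_apply v, ← AEval.of_aeval_smul, minpoly.aeval, zero_smul,
      map_zero]
  let L : degreeLT K μ.natDegree →ₗ[K] AEval' f :=
    (LinearMap.toSpanSingleton K[X] _ v).restrictScalars K ∘ₗ (degreeLT K _).subtype
  have hL : Function.Surjective L := by
    intro x
    obtain ⟨q, rfl⟩ := Submodule.mem_span_singleton.mp (hv ▸ Submodule.mem_top : x ∈ _)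
    have hdeg : q %ₘ μ ∈ degreeLT K μ.natDegree := by
      rw [mem_degreeLT, ← degree_eq_natDegree (minpoly.ne_zero (Algebra.IsIntegral.isIntegral f))]
      exact degree_modByMonic_lt q (minpoly.monic (Algebra.IsIntegral.isIntegral f))
    refine ⟨⟨q %ₘ μ, hdeg⟩, ?_⟩
    conv_rhs => rw [← modByMonic_add_div q μ]
    simp [L, add_smul, mul_comm μ, mul_smul, hμ]
  calc finrank K V = finrank K (AEval' f) := (AEval'.of f).finrank_eq
    _ ≤ finrank K (degreeLT K μ.natDegree) := LinearMap.finrank_le_finrank_of_surjective hL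
    _ = μ.natDegree := by rw [(degreeLTEquiv K _).finrank_eq, finrank_fin_fun]

end Module.End

theorem stmt0 (N : ℕ) (S : Matrix (Fin N) (Fin N) ℂ)
    (h : ∀ H : Matrix (Fin N) (Fin N) ℂ, H * S = S * H →
      ∃ p : Polynomial ℂ, H = Polynomial.aeval S p) :
    Matrix.charpoly S = minpoly ℂ S := by
  set E := Matrix.toLinAlgEquiv' (R := ℂ) (n := Fin N)
  have hcomm : ∀ g, Commute g (E S) → ∃ q : ℂ[X], g = aeval (E S) q := by
    intro g hg
    obtain ⟨q, hq⟩ := h (E.symm g) (E.injective (by simpa using hg.eq))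
    exact ⟨q, by rw [aeval_algHom_apply, ← hq, AlgEquiv.apply_symm_apply]⟩
  have : IsPrincipal ℂ[X] (AEval' (E S)) :=
    (AEval.isTorsion_of_finiteDimensional ℂ _ (E S)).isPrincipal_of_surjective_algebraMap
      (AEval'.surjective_algebraMap_end _ hcomm)
  have hN : N ≤ (minpoly ℂ S).natDegree := by
    simpa [E, Matrix.toLinAlgEquiv'_apply, Matrix.minpoly_toLin'] using
      Module.End.finrank_le_natDegree_minpoly (E S)
  refine eq_of_monic_of_dvd_of_natDegree_le (minpoly.monic S.isIntegral) S.charpoly_monic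
    S.minpoly_dvd_charpoly ?_
  rwa [S.charpoly_natDegree_eq_dim, Fintype.card_fin]
end

section
/- An N×N complex matrix S satisfies charpoly(S) = minpoly(S) if and only if every matrix commuting with S is a polynomial in S. -/
/-!
Choose a separating vector `v` for `K[f]`, i.e. one whose annihilator in `K[X]` is generated by the
minimal polynomial `m`; it exists by the structure theory of finitely generated torsion modules
over the PID `K[X]`. The cyclic subspace `K[f] v` has dimension `deg m`, so `charpoly f = m`
exactly when `v` is a cyclic vector. If it is, an endomorphism `g` commuting with `f` equals the
polynomial `p(f)` for which `g v = p(f) v`. If it is not, `K[f] v` has a nonzero `f`-invariant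
complement `U`: the joint kernel of the functionals `φ ∘ fⁱ`, where `φ (q(f) v)` is the
coefficient of `X ^ (deg m - 1)` in `q mod m`. The projection onto `K[f] v` along `U` commutes
with `f`, but a polynomial in `f` fixing the separating vector `v` is the identity.
-/

open Polynomial Module LinearMap

theorem LinearMap.exists_comp_eq_of_ker_le {K A V W : Type*} [Field K] [AddCommGroup A]
    [Module K A] [AddCommGroup V] [Module K V] [AddCommGroup W] [Module K W]
    (e : A →ₗ[K] V) (ℓ : A →ₗ[K] W) (h : ker e ≤ ker ℓ) : ∃ φ : V →ₗ[K] W, φ ∘ₗ e = ℓ := by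
  obtain ⟨φ, hφ⟩ :=
    LinearMap.exists_extend ((ker e).liftQ ℓ h ∘ₗ e.quotKerEquivRange.symm.toLinearMap)
  refine ⟨φ, LinearMap.ext fun a => ?_⟩
  simpa [quotKerEquivRange_symm_apply_image] using congr($hφ ⟨e a, mem_range_self e a⟩)

namespace Module.End

variable {K V : Type*} [Field K] [AddCommGroup V] [Module K V] (f : Module.End K V)

def IsSeparatingVector (v : V) : Prop :=
  ∀ q : K[X], aeval f q v = 0 → aeval f q = 0

noncomputable def aevalAt (v : V) : K[X] →ₗ[K] V :=
  LinearMap.applyₗ v ∘ₗ (aeval f).toLinearMap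

@[simp] lemma aevalAt_apply (v : V) (q : K[X]) : aevalAt f v q = aeval f q v := rfl

lemma range_aevalAt_mem_invtSubmodule (v : V) : range (aevalAt f v) ∈ f.invtSubmodule := by
  rw [mem_invtSubmodule_iff_forall_mem_of_mem]
  rintro _ ⟨q, rfl⟩
  exact ⟨X * q, by simp [mul_apply]⟩

lemma comp_aevalAt_of_commute {g : Module.End K V} (hg : Commute g f) (v : V) :
    g ∘ₗ aevalAt f v = aevalAt f (g v) := by
  refine LinearMap.ext fun q => ?_
  simp only [comp_apply, aevalAt_apply, ← mul_apply,
    (Algebra.commute_of_mem_adjoin_singleton_of_commute (aeval_mem_adjoin_singleton K f) hg).eq]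

theorem exists_aeval_eq_of_range_aevalAt_eq_top {v : V} (htop : range (aevalAt f v) = ⊤)
    {g : Module.End K V} (hg : Commute g f) : ∃ p : K[X], g = aeval f p := by
  obtain ⟨p, hp⟩ : g v ∈ range (aevalAt f v) := htop ▸ Submodule.mem_top
  have hpf : Commute (aeval f p) f :=
    (Algebra.commute_of_mem_adjoin_self (aeval_mem_adjoin_singleton K f)).symm
  refine ⟨p, (LinearMap.cancel_right (range_eq_top.1 htop)).1 ?_⟩
  rw [comp_aevalAt_of_commute f hg, comp_aevalAt_of_commute f hpf, ← hp, aevalAt_apply]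

variable {f}

lemma ker_aevalAt {v : V} (hv : f.IsSeparatingVector v) :
    ker (aevalAt f v) = (Ideal.span {minpoly K f}).restrictScalars K := by
  ext q
  simp only [mem_ker, aevalAt_apply, Submodule.restrictScalars_mem, Ideal.mem_span_singleton,
    minpoly.dvd_iff]
  exact ⟨hv q, fun h => by rw [h, LinearMap.zero_apply]⟩

lemma finrank_range_aevalAt {v : V} (hv : f.IsSeparatingVector v) :
    finrank K (range (aevalAt f v)) = (minpoly K f).natDegree := by
  rw [← (aevalAt f v).quotKerEquivRange.finrank_eq, ker_aevalAt hv,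
    (Submodule.Quotient.restrictScalarsEquiv K _).finrank_eq, finrank_quotient_span_eq_natDegree]

variable [FiniteDimensional K V]

variable (f) in
theorem exists_isSeparatingVector : ∃ v : V, f.IsSeparatingVector v := by
  obtain ⟨x, hx⟩ := Module.exists_ker_toSpanSingleton_eq_annihilator K[X] (AEval' f)
  refine ⟨(AEval'.of f).symm x, fun q hq => ?_⟩
  have : q ∈ annihilator K[X] (AEval' f) := by
    rw [← hx, mem_ker, toSpanSingleton_apply, ← (AEval'.of f).symm.map_eq_zero_iff]
    simpa using hq
  rwa [AEval.annihilator_eq_ker_aeval, RingHom.mem_ker] at this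

theorem charpoly_eq_minpoly_iff_range_aevalAt_eq_top {v : V} (hv : f.IsSeparatingVector v) :
    f.charpoly = minpoly K f ↔ range (aevalAt f v) = ⊤ := by
  rw [Submodule.eq_top_iff_finrank_eq, finrank_range_aevalAt hv, ← f.charpoly_natDegree]
  refine ⟨fun h => by rw [h], fun h => ?_⟩
  exact eq_of_monic_of_dvd_of_natDegree_le (minpoly.monic (Algebra.IsIntegral.isIntegral f))
    f.charpoly_monic (LinearMap.minpoly_dvd_charpoly f) h.ge

lemma apply_aeval_eq_zero_of_forall_pow_lt {W : Type*} [AddCommGroup W] [Module K W]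
    {φ : V →ₗ[K] W} {y : V} (h : ∀ i < (minpoly K f).natDegree, φ ((f ^ i) y) = 0)
    (q : K[X]) : φ (aeval f q y) = 0 := by
  have hm := minpoly.monic (Algebra.IsIntegral.isIntegral (R := K) f)
  rw [← minpoly.aeval_modByMonic_minpoly, aeval_eq_sum_range, LinearMap.sum_apply, map_sum]
  refine Finset.sum_eq_zero fun i _ => ?_
  rw [LinearMap.smul_apply, map_smul]
  by_cases hi : i < (minpoly K f).natDegree
  · rw [h i hi, smul_zero]
  · rw [coeff_eq_zero_of_degree_lt, zero_smul]
    calc degree (q %ₘ minpoly K f) < degree (minpoly K f) := degree_modByMonic_lt _ hm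
      _ ≤ i := by rw [degree_eq_natDegree hm.ne_zero]; exact_mod_cast not_lt.1 hi

lemma aeval_apply_eq_zero_of_forall_apply_aeval_eq_zero {v : V} {φ : Dual K V}
    (hφ : ∀ q : K[X], φ (aeval f q v) = (q %ₘ minpoly K f).coeff ((minpoly K f).natDegree - 1))
    {r : K[X]} (hr : ∀ q : K[X], φ (aeval f q (aeval f r v)) = 0) : aeval f r v = 0 := by
  set m := minpoly K f
  have hm : m.Monic := minpoly.monic (Algebra.IsIntegral.isIntegral (R := K) f)
  rw [← minpoly.aeval_modByMonic_minpoly] at hr ⊢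
  set s := r %ₘ m
  by_contra hne
  have hs : s ≠ 0 := by rintro hs; simp [hs] at hne
  have hk : s.natDegree < m.natDegree := natDegree_lt_natDegree hs (degree_modByMonic_lt r hm)
  -- `X ^ j * s` has degree `deg m - 1`, so `φ` reads off its leading coefficient.
  set j := m.natDegree - 1 - s.natDegree
  have hdeg : (X ^ j * s).natDegree = m.natDegree - 1 := by
    rw [natDegree_X_pow_mul (n := j) hs]; omega
  have hred : (X ^ j * s) %ₘ m = X ^ j * s :=
    (modByMonic_eq_self_iff hm).2 (degree_lt_degree (by omega))
  have := hr (X ^ j)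
  rw [← mul_apply, ← map_mul, hφ, hred, ← hdeg, coeff_natDegree, leadingCoeff_mul,
    leadingCoeff_X_pow, one_mul, leadingCoeff_eq_zero] at this
  exact hs this

lemma exists_dual_aeval_apply_eq_coeff {v : V} (hv : f.IsSeparatingVector v) :
    ∃ φ : Dual K V,
      ∀ q : K[X], φ (aeval f q v) = (q %ₘ minpoly K f).coeff ((minpoly K f).natDegree - 1) := by
  have hm := minpoly.monic (Algebra.IsIntegral.isIntegral (R := K) f)
  obtain ⟨φ, hφ⟩ := (aevalAt f v).exists_comp_eq_of_ker_le
    (lcoeff K ((minpoly K f).natDegree - 1) ∘ₗ modByMonicHom (minpoly K f)) <| by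
      intro q hq
      rw [ker_aevalAt hv, Submodule.restrictScalars_mem, Ideal.mem_span_singleton,
        ← modByMonic_eq_zero_iff_dvd hm] at hq
      simp [hq]
  exact ⟨φ, fun q => congr($hφ q)⟩

theorem exists_isCompl_range_aevalAt {v : V} (hv : f.IsSeparatingVector v) :
    ∃ U : Submodule K V, IsCompl (range (aevalAt f v)) U ∧ U ∈ f.invtSubmodule := by
  obtain ⟨φ, hφ⟩ := exists_dual_aeval_apply_eq_coeff hv
  let Ψ : V →ₗ[K] Fin (minpoly K f).natDegree → K := LinearMap.pi fun i => φ ∘ₗ f ^ (i : ℕ)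
  have hΨ (y : V) : y ∈ ker Ψ ↔ ∀ q : K[X], φ (aeval f q y) = 0 :=
    ⟨fun hy => apply_aeval_eq_zero_of_forall_pow_lt fun i hi => congr_fun hy ⟨i, hi⟩,
      fun hy => funext fun i => by simpa [Ψ] using hy (X ^ (i : ℕ))⟩
  refine ⟨ker Ψ, (Submodule.isCompl_iff_disjoint _ _ ?_).2 ?_, ?_⟩
  · have := Ψ.finrank_range_add_finrank_ker
    have := (range Ψ).finrank_le
    rw [finrank_range_aevalAt hv]
    simp only [finrank_fin_fun] at this
    omega
  · rw [Submodule.disjoint_def]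
    rintro _ ⟨r, rfl⟩ hr
    exact aeval_apply_eq_zero_of_forall_apply_aeval_eq_zero hφ ((hΨ _).1 hr)
  · rw [mem_invtSubmodule_iff_forall_mem_of_mem]
    intro y hy
    rw [hΨ] at hy ⊢
    intro q
    have := hy (q * X)
    rwa [map_mul, aeval_X, mul_apply] at this

theorem range_aevalAt_eq_top_of_forall_commute {v : V} (hv : f.IsSeparatingVector v)
    (h : ∀ g : Module.End K V, Commute g f → ∃ p : K[X], g = aeval f p) :
    range (aevalAt f v) = ⊤ := by
  obtain ⟨U, hWU, hU⟩ := exists_isCompl_range_aevalAt hv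
  have hπ : Commute (Submodule.projection _ _ hWU) f :=
    (Submodule.isIdempotentElem_projection hWU).commute_iff.2
      ⟨by rw [Submodule.range_projection]; exact range_aevalAt_mem_invtSubmodule f v,
        by rw [Submodule.ker_projection]; exact hU⟩
  obtain ⟨p, hp⟩ := h _ hπ
  have hp1 : aeval f (p - 1) = 0 := hv _ <| by
    rw [map_sub, map_one, LinearMap.sub_apply, ← hp, Module.End.one_apply, sub_eq_zero]
    exact Submodule.projection_apply_of_mem_left hWU ⟨1, by simp⟩
  rw [map_sub, map_one, sub_eq_zero] at hp1
  have hUbot : U = ⊥ := by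
    rw [← Submodule.ker_projection hWU, hp, hp1, Module.End.one_eq_id, ker_id]
  exact eq_top_of_isCompl_bot (hUbot ▸ hWU)

variable (f) in
theorem charpoly_eq_minpoly_iff_forall_commute :
    f.charpoly = minpoly K f ↔
      ∀ g : Module.End K V, Commute g f → ∃ p : K[X], g = aeval f p := by
  obtain ⟨v, hv⟩ := exists_isSeparatingVector f
  rw [charpoly_eq_minpoly_iff_range_aevalAt_eq_top hv]
  exact ⟨fun htop _ => exists_aeval_eq_of_range_aevalAt_eq_top f htop,
    range_aevalAt_eq_top_of_forall_commute hv⟩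

end Module.End

theorem stmt2 (N : ℕ) (S : Matrix (Fin N) (Fin N) ℂ) :
    Matrix.charpoly S = minpoly ℂ S ↔
      ∀ H : Matrix (Fin N) (Fin N) ℂ, H * S = S * H →
        ∃ p : Polynomial ℂ, H = Polynomial.aeval S p := by
  have key := Module.End.charpoly_eq_minpoly_iff_forall_commute (Matrix.toLin' S)
  rw [Matrix.charpoly_toLin', Matrix.minpoly_toLin'] at key
  refine key.trans <| Matrix.toLinAlgEquiv'.toEquiv.forall_congr_right.symm.trans <|
    forall_congr' fun H => ?_
  rw [show Matrix.toLin' S = Matrix.toLinAlgEquiv' S from rfl, aeval_algEquiv]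
  simp only [AlgEquiv.toEquiv_eq_coe, EquivLike.coe_coe, commute_iff_eq, ← map_mul,
    AlgHom.comp_apply, AlgEquiv.coe_toAlgHom, EmbeddingLike.apply_eq_iff_eq]
end

section
/- There is no 3×3 complex matrix T such that: (i) the characteristic polynomial of T equals its minimal polynomial, (ii) S = ![![0,1,1],![0,0,0],![0,0,0]] is a polynomial in T, and (iii) T commutes with H = ![![0,1,0],![0,0,0],![0,0,0]]. -/
/-!
Being a polynomial in `T`, `S` commutes with `T`; hence `T` commutes with both matrix units
`E₀₁ = H` and `E₀₂ = S - H`. This forces `T = a + N` with `N` supported on row `0` off the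
diagonal, so `N² = 0` and the minimal polynomial of `T` divides `(X - a)²`. It therefore has
degree at most `2`, while the characteristic polynomial has degree `3`.
-/

open Polynomial Matrix

theorem minpoly.natDegree_le_of_pow_sub_algebraMap_eq_zero {K A : Type*} [CommRing K] [Nontrivial K]
    [Ring A] [Algebra K A] {x : A} {a : K} {k : ℕ} (h : (x - algebraMap K A a) ^ k = 0) :
    (minpoly K x).natDegree ≤ k := by
  have hmin := minpoly.min K x ((monic_X_sub_C a).pow k) (by simpa using h)
  simpa [(monic_X_sub_C a).natDegree_pow] using natDegree_le_natDegree hmin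

namespace Matrix

variable {n α : Type*} [Fintype n]

theorem mul_self_eq_zero_of_eq_zero_off_row [NonUnitalNonAssocSemiring α] {N : Matrix n n α}
    {i : n} (h : ∀ k l, k ≠ i → N k l = 0) (hii : N i i = 0) : N * N = 0 := by
  ext k l
  rw [mul_apply, zero_apply]
  refine Finset.sum_eq_zero fun m _ => ?_
  by_cases hk : k = i
  · by_cases hm : m = i
    · rw [hk, hm, hii, zero_mul]
    · rw [h m l hm, mul_zero]
  · rw [h k m hk, zero_mul]

theorem sq_sub_scalar_eq_zero_of_commute_single [DecidableEq n] [CommRing α] {M : Matrix n n α}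
    {i : n} (hM : ∀ j, j ≠ i → Commute (single i j 1) M) : (M - scalar n (M i i)) ^ 2 = 0 := by
  rw [sq]
  refine mul_self_eq_zero_of_eq_zero_off_row (i := i) (fun k l hk => ?_) (by simp)
  rcases eq_or_ne k l with rfl | hkl
  · simp [diag_eq_of_commute_single (hM k hk)]
  · simp [row_eq_zero_of_commute_single (hM k hk) hkl.symm, hkl]

end Matrix

theorem stmt15 :
    let S : Matrix (Fin 3) (Fin 3) ℂ := ![![0,1,1],![0,0,0],![0,0,0]]
    let H : Matrix (Fin 3) (Fin 3) ℂ := ![![0,1,0],![0,0,0],![0,0,0]]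
    ¬∃ T : Matrix (Fin 3) (Fin 3) ℂ,
      Matrix.charpoly T = minpoly ℂ T ∧
      (∃ r : Polynomial ℂ, S = Polynomial.aeval T r) ∧
      H * T = T * H := by
  intro S H
  rintro ⟨T, hcp, ⟨r, hr⟩, hHT⟩
  have hH : H = single 0 1 1 := by ext i j; fin_cases i <;> fin_cases j <;> rfl
  have hS : S = single 0 1 1 + single 0 2 1 := by ext i j; fin_cases i <;> fin_cases j <;> simp [S]
  have hSH : S - H = single 0 2 1 := by rw [hS, hH, add_sub_cancel_left]
  have hST : Commute S T := by
    simpa [hr] using ((Commute.all X r).map (aeval T)).symm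
  have hT : ∀ j, j ≠ 0 → Commute (single 0 j 1) T := by
    intro j hj
    fin_cases j
    exacts [absurd rfl hj, hH ▸ hHT, hSH ▸ hST.sub_left hHT]
  have hdeg := minpoly.natDegree_le_of_pow_sub_algebraMap_eq_zero
    (sq_sub_scalar_eq_zero_of_commute_single hT)
  have hdim : (minpoly ℂ T).natDegree = 3 := by
    rw [← hcp, charpoly_natDegree_eq_dim, Fintype.card_fin]
  omega
end
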